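/- Let $S \subset R$ be Lie conformal algebras that are finitely generated as $\mathbb{C}[\partial]$-modules, with $S$ a subalgebra of $R$ such that the quotient $\mathbb{C}[\partial]$-module $R/S$ is torsion. Then $S$ is an ideal of $R$ containing the derived subalgebra $[R,R]$; in particular $R/S$ is an abelian Lie conformal algebra. -/

import Mathlib

open scoped BigOperators

/-- A Lie conformal algebra over `ℂ`: a `ℂ[∂]`-module `R` with a `λ`-bracket
`[a λ b] = ∑ₙ (λ^n/n!) • br n a b`. -/
structure LieConformalAlgebra (R : Type*) [AddCommGroup R] [Module ℂ R] where
  der : R →ₗ[ℂ] R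
  br : ℕ → R →ₗ[ℂ] R →ₗ[ℂ] R
  locality : ∀ a b : R, ∃ N : ℕ, ∀ n : ℕ, N ≤ n → br n a b = 0
  sesqui_left : ∀ (n : ℕ) (a b : R),
    br n (der a) b = if n = 0 then 0 else (-(n : ℂ)) • br (n - 1) a b
  sesqui_right : ∀ (n : ℕ) (a b : R),
    br n a (der b) = der (br n a b) + if n = 0 then 0 else (n : ℂ) • br (n - 1) a b
  skew : ∀ (n : ℕ) (a b : R),
    br n a b = -∑ᶠ j : ℕ, (((-1 : ℂ) ^ (n + j)) / (j.factorial : ℂ)) • (der ^ j) (br (n + j) b a)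
  jacobi : ∀ (m n : ℕ) (a b c : R),
    br m a (br n b c) - br n b (br m a c)
      = ∑ j ∈ Finset.range (m + 1), (m.choose j : ℂ) • br (m + n - j) (br j a b) c

namespace LieConformalAlgebra

variable {R : Type*} [AddCommGroup R] [Module ℂ R] (L : LieConformalAlgebra R)

/-- A torsion element of the underlying `ℂ[∂]`-module. -/
def IsTorsion (x : R) : Prop :=
  ∃ p : Polynomial ℂ, p ≠ 0 ∧ Polynomial.aeval L.der p x = 0

/-- `R` is a finitely generated `ℂ[∂]`-module. -/
def IsFinite : Prop :=
  ∃ s : Finset R, ∀ r : R,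
    r ∈ Submodule.span ℂ {x | ∃ g ∈ s, ∃ k : ℕ, x = (L.der ^ k) g}

/-- A `ℂ[∂]`-submodule `S` that is a finitely generated `ℂ[∂]`-module. -/
def IsFiniteSub (S : Submodule ℂ R) : Prop :=
  ∃ s : Finset R, (↑s : Set R) ⊆ (S : Set R) ∧ ∀ r ∈ S,
    r ∈ Submodule.span ℂ {x | ∃ g ∈ s, ∃ k : ℕ, x = (L.der ^ k) g}

/-- A subalgebra: a `ℂ[∂]`-submodule closed under the `λ`-bracket. -/
def IsSubalgebra (S : Submodule ℂ R) : Prop :=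
  (∀ x ∈ S, L.der x ∈ S) ∧ ∀ a ∈ S, ∀ b ∈ S, ∀ n : ℕ, L.br n a b ∈ S

end LieConformalAlgebra

/-! If `p(∂) a ∈ S` with `p ≠ 0` of degree `d`, sesquilinearity turns the `(m + d)`-th product
of `p(∂) a` with `b` into a sum of the products `br j a b`, `j ≥ m`, whose `j = m` term carries
the nonzero factor `±(leading coefficient of p) · (m + d)! / m!`; on the right the same holds
modulo a `∂`-stable `S`. So a descending induction on `n`, starting at the locality bound, puts
every `br n a b` in `S`: first for `b ∈ S` (where `p(∂) a ∈ S` and `S` is a subalgebra), and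
then, with `S` now known to be an ideal, for `p(∂) b ∈ S` on the right. -/

open Polynomial

theorem Polynomial.aeval_apply_eq_leadingCoeff_smul {K M N : Type*} [CommSemiring K]
    [AddCommMonoid M] [Module K M] [AddCommMonoid N] [Module K N]
    (f : M →ₗ[K] N) (D : Module.End K M) (p : K[X]) (x : M)
    (hlow : ∀ i < p.natDegree, f ((D ^ i) x) = 0) :
    f (aeval D p x) = p.leadingCoeff • f ((D ^ p.natDegree) x) := by
  rw [aeval_eq_sum_range, Finset.sum_range_succ, LinearMap.add_apply, map_add,
    LinearMap.sum_apply, map_sum, Finset.sum_eq_zero, zero_add]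
  · rw [LinearMap.smul_apply, map_smul, coeff_natDegree]
  · intro i hi
    simp [hlow i (Finset.mem_range.mp hi)]

namespace LieConformalAlgebra

variable {R : Type*} [AddCommGroup R] [Module ℂ R] (L : LieConformalAlgebra R)

theorem br_der_pow_left (k m : ℕ) (a b : R) :
    L.br (m + k) ((L.der ^ k) a) b = ((-1 : ℂ) ^ k * (m + k).descFactorial k) • L.br m a b := by
  induction k generalizing m a with
  | zero => simp
  | succ k ih =>
    rw [pow_succ, Module.End.mul_apply, ← add_assoc, add_right_comm, ih, L.sesqui_left,
      if_neg m.succ_ne_zero, smul_smul, Nat.add_sub_cancel, add_right_comm,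
      Nat.descFactorial_succ, add_right_comm, Nat.add_sub_cancel]
    push_cast
    ring_nf

theorem br_mem_of_forall_gt (S : Submodule ℂ R) (a b : R)
    (step : ∀ m, (∀ j > m, L.br j a b ∈ S) → L.br m a b ∈ S) (n : ℕ) : L.br n a b ∈ S := by
  obtain ⟨N, hN⟩ := L.locality a b
  refine Nat.strong_decreasing_induction ⟨N, fun j hj => ?_⟩ step n
  rw [hN j hj.le]
  exact S.zero_mem

variable {L}

theorem br_der_right_mem_of_forall_gt {S : Submodule ℂ R} (hder : ∀ x ∈ S, L.der x ∈ S)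
    {a b : R} {m : ℕ} (hb : ∀ j > m, L.br j a b ∈ S) : ∀ j > m + 1, L.br j a (L.der b) ∈ S := by
  intro j hj
  rw [L.sesqui_right, if_neg (by omega)]
  exact S.add_mem (hder _ (hb j (by omega))) (S.smul_mem _ (hb (j - 1) (by omega)))

theorem mk_br_der_pow_right {S : Submodule ℂ R} (hder : ∀ x ∈ S, L.der x ∈ S)
    (k : ℕ) {a b : R} {m : ℕ} (hb : ∀ j > m, L.br j a b ∈ S) :
    (Submodule.Quotient.mk (L.br (m + k) a ((L.der ^ k) b)) : R ⧸ S)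
      = ((m + k).descFactorial k : ℂ) • Submodule.Quotient.mk (L.br m a b) := by
  induction k generalizing m b with
  | zero => simp
  | succ k ih =>
    have hder_br : (Submodule.Quotient.mk (L.br (m + 1) a (L.der b)) : R ⧸ S)
        = ((m + 1 : ℕ) : ℂ) • Submodule.Quotient.mk (L.br m a b) := by
      rw [L.sesqui_right, if_neg m.succ_ne_zero, Nat.add_sub_cancel, Submodule.Quotient.mk_add,
        (Submodule.Quotient.mk_eq_zero S).mpr (hder _ (hb _ (by omega))), zero_add,
        Submodule.Quotient.mk_smul]
    rw [pow_succ, Module.End.mul_apply, ← add_assoc, add_right_comm,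
      ih (br_der_right_mem_of_forall_gt hder hb), hder_br, smul_smul, add_right_comm,
      Nat.descFactorial_succ, add_right_comm, Nat.add_sub_cancel]
    push_cast
    ring_nf

theorem br_mem_of_br_aeval_left_mem {S : Submodule ℂ R} {p : ℂ[X]} (hp : p ≠ 0) {a b : R}
    (h : ∀ n, L.br n (aeval L.der p a) b ∈ S) (n : ℕ) : L.br n a b ∈ S := by
  refine L.br_mem_of_forall_gt S a b (fun m hm => ?_) n
  set d := p.natDegree
  have key := aeval_apply_eq_leadingCoeff_smul (S.mkQ ∘ₗ (L.br (m + d)).flip b) L.der p a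
    fun i hi => by
      rw [LinearMap.comp_apply, LinearMap.flip_apply, show m + d = (m + d - i) + i by omega,
        br_der_pow_left, Submodule.mkQ_apply, Submodule.Quotient.mk_smul,
        (Submodule.Quotient.mk_eq_zero S).mpr (hm _ (by omega)), smul_zero]
  rw [LinearMap.comp_apply, LinearMap.flip_apply, LinearMap.comp_apply, LinearMap.flip_apply,
    br_der_pow_left, Submodule.mkQ_apply, Submodule.mkQ_apply,
    (Submodule.Quotient.mk_eq_zero S).mpr (h _), Submodule.Quotient.mk_smul, smul_smul] at key
  rw [← Submodule.Quotient.mk_eq_zero S]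
  refine (smul_eq_zero.mp key.symm).resolve_left (mul_ne_zero (leadingCoeff_ne_zero.mpr hp)
    (mul_ne_zero (pow_ne_zero _ (by norm_num)) ?_))
  exact_mod_cast (Nat.descFactorial_eq_zero_iff_lt.not.mpr (by omega))

theorem br_mem_of_br_aeval_right_mem {S : Submodule ℂ R} (hder : ∀ x ∈ S, L.der x ∈ S)
    {p : ℂ[X]} (hp : p ≠ 0) {a b : R}
    (h : ∀ n, L.br n a (aeval L.der p b) ∈ S) (n : ℕ) : L.br n a b ∈ S := by
  refine L.br_mem_of_forall_gt S a b (fun m hm => ?_) n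
  set d := p.natDegree
  have key := aeval_apply_eq_leadingCoeff_smul (S.mkQ ∘ₗ L.br (m + d) a) L.der p b
    fun i hi => by
      rw [LinearMap.comp_apply, show m + d = (m + d - i) + i by omega, Submodule.mkQ_apply,
        mk_br_der_pow_right hder i (fun j hj => hm j (by omega)),
        (Submodule.Quotient.mk_eq_zero S).mpr (hm _ (by omega)), smul_zero]
  rw [LinearMap.comp_apply, LinearMap.comp_apply, Submodule.mkQ_apply, Submodule.mkQ_apply,
    mk_br_der_pow_right hder d hm, (Submodule.Quotient.mk_eq_zero S).mpr (h _), smul_smul] at key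
  rw [← Submodule.Quotient.mk_eq_zero S]
  refine (smul_eq_zero.mp key.symm).resolve_left (mul_ne_zero (leadingCoeff_ne_zero.mpr hp) ?_)
  exact_mod_cast (Nat.descFactorial_eq_zero_iff_lt.not.mpr (by omega))

end LieConformalAlgebra

open LieConformalAlgebra in
theorem cotorsion_subalgebra_is_ideal_general {R : Type*} [AddCommGroup R] [Module ℂ R]
    (L : LieConformalAlgebra R) (S : Submodule ℂ R) (hS : L.IsSubalgebra S)
    (htor : ∀ r : R, ∃ p : Polynomial ℂ, p ≠ 0 ∧ Polynomial.aeval L.der p r ∈ S) :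
    (∀ r : R, ∀ t ∈ S, ∀ n : ℕ, L.br n r t ∈ S) ∧
    (∀ a b : R, ∀ n : ℕ, L.br n a b ∈ S) := by
  have hideal : ∀ r : R, ∀ t ∈ S, ∀ n : ℕ, L.br n r t ∈ S := fun r t ht => by
    obtain ⟨p, hp, hpr⟩ := htor r
    exact br_mem_of_br_aeval_left_mem hp fun n => hS.2 _ hpr _ ht n
  refine ⟨hideal, fun a b => ?_⟩
  obtain ⟨q, hq, hqb⟩ := htor b
  exact br_mem_of_br_aeval_right_mem hS.1 hq fun n => hideal a _ hqb n

open LieConformalAlgebra in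
/-- a subalgebra of finite cotorsion is an ideal containing the derived
subalgebra, so the quotient is abelian. -/
theorem cotorsion_subalgebra_is_ideal {R : Type*} [AddCommGroup R] [Module ℂ R]
    (L : LieConformalAlgebra R) (hR : L.IsFinite) (S : Submodule ℂ R)
    (hSfin : L.IsFiniteSub S) (hS : L.IsSubalgebra S)
    (htor : ∀ r : R, ∃ p : Polynomial ℂ, p ≠ 0 ∧ Polynomial.aeval L.der p r ∈ S) :
    (∀ r : R, ∀ t ∈ S, ∀ n : ℕ, L.br n r t ∈ S) ∧
    (∀ a b : R, ∀ n : ℕ, L.br n a b ∈ S) :=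
  cotorsion_subalgebra_is_ideal_general L S hS htor
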